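/- In the Erdős–Rényi random graph G(k, 1/2), for any real t̄ with t̄ ≤ (k−1)/2, the probability that the maximum degree is at most t̄ satisfies Pr(Δ(G(k,1/2)) ≤ t̄) ≤ exp(−C(k,2)·Λ*(t̄/(k−1))). -/

import Mathlib

/-!
A graph with `Δ ≤ t̄` has at most `k t̄ / 2 = C(k,2) x` edges, where `x = t̄ / (k - 1) ≤ 1/2`, so it is
enough to count edge sets of size at most `C(k,2) x`. As `Λ*(x) = log 2 - H(x)` with `H` the binary
entropy, the bound is then Chernoff's estimate `∑_{j ≤ n x} C(n, j) ≤ exp (n H(x))`: multiplied by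
`x ^ (n x) (1 - x) ^ (n - n x) = exp (-n H(x))`, each term is dominated by the corresponding term of
the binomial expansion of `(x + (1 - x)) ^ n = 1`.
-/

open scoped Classical

/-- `Λ*(x) = x ln(2x) + (1-x) ln(2(1-x))` with `Real.log 0 = 0` giving `0·ln 0 = 0`. -/
noncomputable def LambdaStar (x : ℝ) : ℝ :=
  x * Real.log (2 * x) + (1 - x) * Real.log (2 * (1 - x))

open Finset Real

lemma LambdaStar_eq_log_two_sub_binEntropy (x : ℝ) : LambdaStar x = log 2 - binEntropy x := by
  have mul_log_two_mul (y : ℝ) : y * log (2 * y) = y * log 2 + y * log y := by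
    rcases eq_or_ne y 0 with rfl | hy
    · simp
    · rw [log_mul two_ne_zero hy]; ring
  rw [LambdaStar, binEntropy, mul_log_two_mul, mul_log_two_mul, log_inv, log_inv]
  ring

lemma exp_neg_mul_LambdaStar (n : ℕ) (x : ℝ) :
    exp (-(n : ℝ) * LambdaStar x) = exp (n * binEntropy x) / 2 ^ n := by
  rw [← exp_log (pow_pos two_pos n), ← exp_sub, log_pow, LambdaStar_eq_log_two_sub_binEntropy]
  ring_nf

/-- `x ^ j * (1 - x) ^ (n - j)` decreases in `j` because `x ≤ 1 - x`, and at `j = n x` it is the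
left side. -/
lemma exp_neg_mul_binEntropy_le_pow_mul_pow {n j : ℕ} {x : ℝ} (hx0 : 0 < x) (hx : x ≤ 1 / 2)
    (hj : (j : ℝ) ≤ n * x) (hjn : j ≤ n) :
    exp (-(n * binEntropy x)) ≤ x ^ j * (1 - x) ^ (n - j) := by
  have h1x : 0 < 1 - x := by linarith
  have hlog : log x ≤ log (1 - x) := log_le_log hx0 (by linarith)
  have hweight : x ^ j * (1 - x) ^ (n - j) = exp (j * log x + (n - j : ℕ) * log (1 - x)) := by
    rw [exp_add, exp_nat_mul, exp_nat_mul, exp_log hx0, exp_log h1x]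
  rw [hweight, exp_le_exp, binEntropy, log_inv, log_inv, Nat.cast_sub hjn]
  nlinarith

lemma sum_range_choose_le_exp_mul_binEntropy {n m : ℕ} {x : ℝ} (hx0 : 0 ≤ x) (hx : x ≤ 1 / 2)
    (hm : (m : ℝ) ≤ n * x) : ∑ j ∈ range (m + 1), (n.choose j : ℝ) ≤ exp (n * binEntropy x) := by
  rcases hx0.eq_or_lt with rfl | hx0
  · obtain rfl : m = 0 := by exact_mod_cast (hm.trans_eq (mul_zero _)).antisymm m.cast_nonneg
    simp
  have hmn : m ≤ n := by
    have : (n : ℝ) * x ≤ n := by nlinarith [(n.cast_nonneg : (0 : ℝ) ≤ n)]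
    exact_mod_cast hm.trans this
  have hweight : (∑ j ∈ range (m + 1), (n.choose j : ℝ)) * exp (-(n * binEntropy x)) ≤ 1 :=
    calc (∑ j ∈ range (m + 1), (n.choose j : ℝ)) * exp (-(n * binEntropy x))
        ≤ ∑ j ∈ range (m + 1), x ^ j * (1 - x) ^ (n - j) * n.choose j := by
          rw [sum_mul]
          refine sum_le_sum fun j hj => ?_
          have hjm : j ≤ m := Nat.lt_succ_iff.mp (mem_range.mp hj)
          rw [mul_comm]
          gcongr
          exact exp_neg_mul_binEntropy_le_pow_mul_pow hx0 hx
            (le_trans (by exact_mod_cast hjm) hm) (hjm.trans hmn)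
      _ ≤ ∑ j ∈ range (n + 1), x ^ j * (1 - x) ^ (n - j) * n.choose j :=
          sum_le_sum_of_subset_of_nonneg (range_subset_range.2 (by omega)) fun j _ _ => by
            have : 0 ≤ 1 - x := by linarith
            positivity
      _ = 1 := by rw [← add_pow, add_sub_cancel, one_pow]
  rwa [exp_neg, ← div_eq_mul_inv, div_le_one (exp_pos _)] at hweight

namespace SimpleGraph

variable {V : Type*} [Fintype V]

lemma card_edgeFinset_le_of_maxDegree_le (G : SimpleGraph V) [DecidableRel G.Adj] {t : ℝ}
    (ht : G.maxDegree ≤ t) :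
    (#G.edgeFinset : ℝ) ≤ (Fintype.card V).choose 2 * (t / (Fintype.card V - 1)) := by
  rcases Nat.lt_or_ge (Fintype.card V) 2 with hV | hV
  · have hE := G.card_edgeFinset_le_card_choose_two
    rw [Nat.choose_eq_zero_of_lt hV] at hE ⊢
    simp [Nat.le_zero.mp hE]
  have hV1 : (0 : ℝ) < Fintype.card V - 1 := by
    have : (2 : ℝ) ≤ Fintype.card V := by exact_mod_cast hV
    linarith
  have hsum : (2 * #G.edgeFinset : ℝ) ≤ Fintype.card V * t :=
    calc (2 * #G.edgeFinset : ℝ) = ∑ v, (G.degree v : ℝ) := by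
          exact_mod_cast G.sum_degrees_eq_twice_card_edges.symm
      _ ≤ ∑ _v : V, t := sum_le_sum fun v _ => (Nat.cast_le.mpr (G.degree_le_maxDegree v)).trans ht
      _ = Fintype.card V * t := by rw [sum_const, card_univ, nsmul_eq_mul]
  rw [Nat.cast_choose_two]
  field_simp
  linarith

lemma card_filter_card_edgeFinset_le_le_sum_choose [DecidableEq V] (m : ℕ) :
    #{G : SimpleGraph V | #G.edgeFinset ≤ m} ≤
      ∑ j ∈ range (m + 1), ((Fintype.card V).choose 2).choose j := by
  set E := (⊤ : SimpleGraph V).edgeFinset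
  calc #{G : SimpleGraph V | #G.edgeFinset ≤ m}
      ≤ #((range (m + 1)).biUnion fun j => E.powersetCard j) := by
        refine card_le_card_of_injOn (fun G => G.edgeFinset) (fun G hG => ?_)
          fun G _ H _ hGH => edgeFinset_inj.mp hGH
        simp only [coe_filter, Set.mem_ofPred_eq, mem_univ, true_and] at hG
        simp only [coe_biUnion, coe_range, Set.mem_Iio, Set.mem_iUnion, mem_coe, mem_powersetCard]
        exact ⟨_, Nat.lt_succ_of_le hG, edgeFinset_mono le_top, rfl⟩
    _ ≤ ∑ j ∈ range (m + 1), #(E.powersetCard j) := card_biUnion_le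
    _ = ∑ j ∈ range (m + 1), ((Fintype.card V).choose 2).choose j := by
        simp only [E, card_powersetCard, card_edgeFinset_top_eq_card_choose_two]

end SimpleGraph

/-- In `G(k,1/2)` (uniform over all graphs on `k` labelled vertices),
`Pr(Δ ≤ t̄) ≤ exp(−C(k,2)·Λ*(t̄/(k−1)))` whenever `t̄ ≤ (k−1)/2`. -/
theorem max_degree_tail_bound (k : ℕ) (tbar : ℝ) (ht : tbar ≤ ((k : ℝ) - 1) / 2) :
    ((Finset.univ.filter
          (fun G : SimpleGraph (Fin k) => (G.maxDegree : ℝ) ≤ tbar)).card : ℝ) /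
        (2 ^ k.choose 2 : ℝ) ≤
      Real.exp (-(k.choose 2 : ℝ) * LambdaStar (tbar / ((k : ℝ) - 1))) := by
  rcases lt_or_ge tbar 0 with htneg | htnonneg
  · rw [filter_false_of_mem fun G _ => (htneg.trans_le G.maxDegree.cast_nonneg).not_ge,
      card_empty, Nat.cast_zero, zero_div]
    positivity
  set x := tbar / ((k : ℝ) - 1)
  have hk : 0 ≤ (k : ℝ) - 1 := by linarith
  have hx0 : 0 ≤ x := div_nonneg htnonneg hk
  have hx : x ≤ 1 / 2 := div_le_of_le_mul₀ hk (by norm_num) (by linarith)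
  set m := ⌊(k.choose 2 : ℝ) * x⌋₊
  have hedges : ∀ G ∈ (univ : Finset (SimpleGraph (Fin k))), (G.maxDegree : ℝ) ≤ tbar →
      #G.edgeFinset ≤ m := fun G _ hG =>
    Nat.le_floor (by simpa using G.card_edgeFinset_le_of_maxDegree_le hG)
  rw [exp_neg_mul_LambdaStar, div_le_div_iff_of_pos_right (by positivity)]
  calc (#{G : SimpleGraph (Fin k) | (G.maxDegree : ℝ) ≤ tbar} : ℝ)
      ≤ #{G : SimpleGraph (Fin k) | #G.edgeFinset ≤ m} := by
        exact_mod_cast card_le_card (monotone_filter_right _ hedges)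
    _ ≤ ∑ j ∈ range (m + 1), ((k.choose 2).choose j : ℝ) := by
        have := SimpleGraph.card_filter_card_edgeFinset_le_le_sum_choose (V := Fin k) m
        rw [Fintype.card_fin] at this
        exact_mod_cast this
    _ ≤ exp (k.choose 2 * binEntropy x) :=
        sum_range_choose_le_exp_mul_binEntropy hx0 hx (Nat.floor_le (by positivity))
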